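/- arXiv:1305.6461 — 7 statements merged into one kernel-verified Lean document; each statement's English description precedes it below -/
import Mathlib

section
/- Suppose t₀, t₁ are real numbers and c > 0 is such that |sin(k(t₀ - t₁))| ≥ c/k for all positive integers k. If 0 < q < 2c/|t₀ - t₁|, then there exists c' > 0 such that |sin(√(k² + q)·(t₀ - t₁))| ≥ c'/k for all positive integers k. In fact one can take c' = c - q|t₀ - t₁|/2. -/
/-! Since `√(k² + q) - k ≤ q / (2k)` and `sin` is 1-Lipschitz, replacing the frequency `k` by
`√(k² + q)` moves `|sin (k (t₀ - t₁))|` by at most `q |t₀ - t₁| / (2k)`, which the hypothesis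
`q |t₀ - t₁| < 2c` keeps below the lower bound `c / k`. -/

open Real

lemma Real.abs_sin_le_abs_sin_add_abs_sub (a b : ℝ) : |sin b| ≤ |sin a| + |a - b| := by
  have hsin := abs_sub_abs_le_abs_sub (sin b) (sin a)
  have hlip := abs_sin_sub_sin_le b a
  rw [abs_sub_comm b a] at hlip
  linarith

lemma Real.abs_sqrt_sq_add_sub_le {x q : ℝ} (hx : 0 < x) (hq : 0 ≤ q) :
    |√(x ^ 2 + q) - x| ≤ q / (2 * x) := by
  have hlower : x ≤ √(x ^ 2 + q) := (le_sqrt' hx).2 (by linarith)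
  have hupper : √(x ^ 2 + q) ≤ x + q / (2 * x) := by
    rw [sqrt_le_left (by positivity)]
    have hcross : 2 * x * (q / (2 * x)) = q := by field_simp
    nlinarith [sq_nonneg (q / (2 * x))]
  rw [abs_of_nonneg (by linarith)]
  linarith

lemma Real.abs_sin_mul_sub_le_abs_sin_sqrt_sq_add_mul {x q : ℝ} (hx : 0 < x) (hq : 0 ≤ q)
    (t : ℝ) : |sin (x * t)| - q / (2 * x) * |t| ≤ |sin (√(x ^ 2 + q) * t)| := by
  have hshift : |√(x ^ 2 + q) * t - x * t| ≤ q / (2 * x) * |t| := by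
    rw [← sub_mul, abs_mul]
    gcongr
    exact abs_sqrt_sq_add_sub_le hx hq
  linarith [abs_sin_le_abs_sin_add_abs_sub (√(x ^ 2 + q) * t) (x * t)]

theorem stmt_3_general (t₀ t₁ : ℝ) (c : ℝ)
    (hsin : ∀ k : ℕ, 1 ≤ k → |Real.sin (k * (t₀ - t₁))| ≥ c / k)
    (q : ℝ) (hq : 0 < q) (hq' : q < 2 * c / |t₀ - t₁|) :
    0 < c - q * |t₀ - t₁| / 2 ∧
    ∀ k : ℕ, 1 ≤ k →
      |Real.sin (Real.sqrt ((k : ℝ) ^ 2 + q) * (t₀ - t₁))| ≥ (c - q * |t₀ - t₁| / 2) / k := by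
  have hdist : 0 < |t₀ - t₁| := by
    refine (abs_nonneg _).lt_of_ne fun h => ?_
    rw [← h, div_zero] at hq'
    linarith
  have hqc : q * |t₀ - t₁| < 2 * c := (lt_div_iff₀ hdist).1 hq'
  refine ⟨by linarith, fun k hk => ?_⟩
  have hkpos : (0 : ℝ) < k := by exact_mod_cast hk
  calc (c - q * |t₀ - t₁| / 2) / k = c / k - q / (2 * k) * |t₀ - t₁| := by
        field_simp
    _ ≤ |sin (k * (t₀ - t₁))| - q / (2 * k) * |t₀ - t₁| := by linarith [hsin k hk]
    _ ≤ |sin (√((k : ℝ) ^ 2 + q) * (t₀ - t₁))| :=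
        abs_sin_mul_sub_le_abs_sin_sqrt_sq_add_mul hkpos hq.le _

theorem stmt_3 (t₀ t₁ : ℝ) (hne : t₀ ≠ t₁) (c : ℝ) (hc : 0 < c)
    (hsin : ∀ k : ℕ, 1 ≤ k → |Real.sin (k * (t₀ - t₁))| ≥ c / k)
    (q : ℝ) (hq : 0 < q) (hq' : q < 2 * c / |t₀ - t₁|) :
    0 < c - q * |t₀ - t₁| / 2 ∧
    ∀ k : ℕ, 1 ≤ k →
      |Real.sin (Real.sqrt ((k : ℝ) ^ 2 + q) * (t₀ - t₁))| ≥ (c - q * |t₀ - t₁| / 2) / k :=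
  stmt_3_general t₀ t₁ c hsin q hq hq'
end

section
/- The set of pairs (t₀, t₁) ∈ ℝ² such that (t₀ - t₁)/π ∈ ℚ and sin((t₀ - t₁)·√(k² + q)) ≠ 0 for all positive integers k, is dense in ℝ². -/
/-! For rational `r`, `sin (r π √(k² + q)) = 0` means `r √(k² + q) ∈ ℤ`. For `r ≠ 0` this
makes `√(k² + q)` rational, so `q = u / v` is rational and `a = v √(k² + q)` is an integer with
`a² = (v k)² + u v`. As `(a - v k)(a + v k) = u v` with `a > v k ≥ 0`, we get `a ≤ u v`, so
`a ∣ (u v)!` and `r (u v)!` is an integer. Hence every rational `r` with `r (u v)! ∉ ℤ`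
satisfies the sine condition for all `k`, and such `r` are dense in `ℝ`. -/

open Set

theorem Int.le_of_sq_eq_sq_add {a b c : ℤ} (hc : 0 < c) (h : a ^ 2 = b ^ 2 + c) : a ≤ c := by
  have hba : |b| + 1 ≤ |a| := by
    have : |b| < |a| := sq_lt_sq.mp (by nlinarith)
    omega
  nlinarith [sq_abs a, sq_abs b, abs_nonneg b, le_abs_self a]

theorem Rat.exists_intCast_eq_of_pow_eq_intCast {x : ℚ} {n : ℕ} {m : ℤ} (hn : n ≠ 0)
    (h : x ^ n = m) : ∃ a : ℤ, x = a := by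
  have hden : x.den ^ n = 1 := by rw [← Rat.den_pow, h, Rat.den_intCast]
  exact ⟨x.num, (Rat.coe_int_num_of_den_eq_one ((pow_eq_one_iff_left hn).mp hden)).symm⟩

theorem Rat.exists_intCast_dvd_factorial_of_sq_eq_sq_add {Q s : ℚ} (k : ℕ) (hQ : 0 < Q)
    (h : s ^ 2 = k ^ 2 + Q) :
    ∃ a : ℤ, s * Q.den = a ∧ a ∣ ((Q.num * Q.den).toNat.factorial : ℕ) := by
  have hsq : (s * Q.den) ^ 2 = (((k * Q.den) ^ 2 + Q.num * Q.den : ℤ) : ℚ) := by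
    push_cast
    rw [← Rat.mul_den_eq_num Q]
    linear_combination (Q.den : ℚ) ^ 2 * h
  obtain ⟨a, ha⟩ := Rat.exists_intCast_eq_of_pow_eq_intCast two_ne_zero hsq
  replace hsq : a ^ 2 = (k * Q.den) ^ 2 + Q.num * Q.den := by
    rw [ha] at hsq
    exact_mod_cast hsq
  have hpos : 0 < Q.num * Q.den := mul_pos (Rat.num_pos.mpr hQ) (by exact_mod_cast Q.pos)
  have hle := abs_le.mp (Int.le_of_sq_eq_sq_add hpos ((sq_abs a).trans hsq))
  have ha0 : a ≠ 0 := by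
    rintro rfl
    nlinarith [sq_nonneg ((k : ℤ) * Q.den)]
  refine ⟨a, ha, ?_⟩
  rw [← Int.natAbs_dvd_natAbs, Int.natAbs_natCast]
  exact Nat.dvd_factorial (by omega) (by omega)

theorem Real.sqrt_eq_ratCast_of_mul_eq_intCast {x : ℝ} {r : ℚ} {n : ℤ} (hr : r ≠ 0)
    (h : (r : ℝ) * √x = n) : √x = ((n / r : ℚ) : ℝ) := by
  push_cast
  rw [← h]
  field_simp

theorem mul_factorial_mem_range_intCast_of_mul_sqrt {Q : ℚ} (hQ : 0 < Q) (k : ℕ) {r : ℚ}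
    (h : (r : ℝ) * √(k ^ 2 + Q) ∈ range ((↑) : ℤ → ℝ)) :
    r * (Q.num * Q.den).toNat.factorial ∈ range ((↑) : ℤ → ℚ) := by
  obtain ⟨n, hn⟩ := h
  rcases eq_or_ne r 0 with rfl | hr
  · exact ⟨0, by simp⟩
  set s : ℚ := n / r
  have hs : √(k ^ 2 + Q) = (s : ℝ) := Real.sqrt_eq_ratCast_of_mul_eq_intCast hr hn.symm
  have hs2 : s ^ 2 = k ^ 2 + Q := by
    have : ((s ^ 2 : ℚ) : ℝ) = k ^ 2 + Q := by
      push_cast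
      rw [← hs, Real.sq_sqrt (by positivity)]
    exact_mod_cast this
  obtain ⟨a, ha, c, hc⟩ := Rat.exists_intCast_dvd_factorial_of_sq_eq_sq_add k hQ hs2
  have hrs : r * s = n := by simp only [s]; field_simp
  refine ⟨n * Q.den * c, ?_⟩
  rw [show ((Q.num * Q.den).toNat.factorial : ℚ) = a * c by exact_mod_cast hc, ← ha,
    ← mul_assoc, ← mul_assoc, hrs]
  push_cast
  ring

theorem exists_nat_mul_mem_range_intCast_of_mul_sqrt {q : ℝ} (hq : 0 < q) :
    ∃ M : ℕ, 0 < M ∧ ∀ (k : ℕ) (r : ℚ), (r : ℝ) * √(k ^ 2 + q) ∈ range ((↑) : ℤ → ℝ) →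
      (r : ℝ) * M ∈ range ((↑) : ℤ → ℝ) := by
  by_cases hQ : ∃ Q : ℚ, (Q : ℝ) = q
  · obtain ⟨Q, rfl⟩ := hQ
    refine ⟨(Q.num * Q.den).toNat.factorial, Nat.factorial_pos _, fun k r h => ?_⟩
    obtain ⟨j, hj⟩ := mul_factorial_mem_range_intCast_of_mul_sqrt (by exact_mod_cast hq) k h
    exact ⟨j, by exact_mod_cast hj⟩
  · refine ⟨1, one_pos, ?_⟩
    rintro k r ⟨n, hn⟩
    rcases eq_or_ne r 0 with rfl | hr
    · exact ⟨0, by simp⟩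
    refine absurd ⟨(n / r) ^ 2 - k ^ 2, ?_⟩ hQ
    rw [Rat.cast_sub, Rat.cast_pow, ← Real.sqrt_eq_ratCast_of_mul_eq_intCast hr hn.symm,
      Real.sq_sqrt (by positivity)]
    push_cast
    ring

theorem dense_rat_mul_notMem_range_intCast {M : ℕ} (hM : 0 < M) {c : ℝ} (hc : c ≠ 0) :
    Dense {x : ℝ | ∃ r : ℚ, x = r * c ∧ (r : ℝ) * M ∉ range ((↑) : ℤ → ℝ)} := by
  have hM' : (M : ℝ) ≠ 0 := by positivity
  have hnonint : Dense (range ((↑) : ℚ → ℝ) ∩ (range ((↑) : ℤ → ℝ))ᶜ) :=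
    Rat.denseRange_cast.inter_of_isOpen_right ((countable_range _).dense_compl ℝ)
      Real.isOpen_compl_range_intCast
  refine ((mul_right_surjective₀ (div_ne_zero hc hM')).denseRange.dense_image
    (continuous_mul_const _) hnonint).mono ?_
  rintro _ ⟨_, ⟨⟨s, rfl⟩, hs⟩, rfl⟩
  refine ⟨s / M, by push_cast; ring, ?_⟩
  push_cast
  rwa [div_mul_cancel₀ _ hM']

theorem stmt_8 (q : ℝ) (hq : 0 < q) :
    Dense {p : ℝ × ℝ | (∃ r : ℚ, (p.1 - p.2) / Real.pi = (r : ℝ)) ∧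
      ∀ k : ℕ, 1 ≤ k → Real.sin ((p.1 - p.2) * Real.sqrt ((k : ℝ) ^ 2 + q)) ≠ 0} := by
  obtain ⟨M, hM, hclear⟩ := exists_nat_mul_mem_range_intCast_of_mul_sqrt hq
  have hdense :=
    (dense_rat_mul_notMem_range_intCast hM Real.pi_ne_zero).prod (dense_univ (X := ℝ))
  have hsurj : Function.Surjective fun p : ℝ × ℝ => (p.1 + p.2, p.2) :=
    fun p => ⟨(p.1 - p.2, p.2), by simp⟩
  refine (hsurj.denseRange.dense_image (by fun_prop) hdense).mono ?_
  rintro _ ⟨⟨_, y⟩, ⟨⟨r, rfl, hr⟩, -⟩, rfl⟩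
  simp only [add_sub_cancel_right, mem_ofPred_eq]
  refine ⟨⟨r, by field_simp⟩, fun k _ hsin => hr (hclear k r ?_)⟩
  obtain ⟨n, hn⟩ := Real.sin_eq_zero_iff.mp hsin
  exact ⟨n, mul_right_cancel₀ Real.pi_ne_zero (by rw [hn]; ring)⟩
end

section
/- Let τ ∈ ℝ, δ > 0, and let q be a positive irrational real number. Then there exists τ' ∈ π·ℚ with |τ - τ'| < δ and sin(τ'·√(k² + q)) ≠ 0 for all positive integers k. -/
/-! Since `k ^ 2 + q` is irrational, so is `r * √(k ^ 2 + q)` for every rational `r ≠ 0`, and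
`sin (r * π * √(k ^ 2 + q))` vanishes only when that number is an integer. It remains to pick
`τ'` among the nonzero rational multiples of `π`, which are dense. -/

open Real

theorem Irrational.sin_mul_pi_ne_zero {x : ℝ} (hx : Irrational x) : sin (x * π) ≠ 0 := by
  rintro hsin
  obtain ⟨n, hn⟩ := sin_eq_zero_iff.mp hsin
  exact hx.ne_int n (mul_right_cancel₀ pi_ne_zero hn).symm

theorem Irrational.sqrt {x : ℝ} (hx : Irrational x) (hx₀ : 0 ≤ x) : Irrational (√x) :=
  .of_pow 2 (by rwa [sq_sqrt hx₀])

theorem exists_ratCast_ne_btwn {a b : ℝ} (hab : a < b) (c : ℝ) :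
    ∃ r : ℚ, a < r ∧ (r : ℝ) < b ∧ (r : ℝ) ≠ c := by
  obtain ⟨_, ⟨⟨r, rfl⟩, hrc⟩, har, hrb⟩ :=
    (Rat.denseRange_cast.sdiff_singleton c).exists_between hab
  exact ⟨r, har, hrb, hrc⟩

theorem stmt_9 (τ : ℝ) (δ : ℝ) (hδ : 0 < δ) (q : ℝ) (hq : 0 < q) (hirr : Irrational q) :
    ∃ τ' : ℝ, (∃ r : ℚ, τ' = (r : ℝ) * Real.pi) ∧ |τ - τ'| < δ ∧
      ∀ k : ℕ, 1 ≤ k → Real.sin (τ' * Real.sqrt ((k : ℝ) ^ 2 + q)) ≠ 0 := by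
  obtain ⟨r, hlo, hhi, hr₀⟩ := exists_ratCast_ne_btwn
    (div_lt_div_of_pos_right (by linarith : τ - δ < τ + δ) pi_pos) 0
  rw [div_lt_iff₀ pi_pos] at hlo
  rw [lt_div_iff₀ pi_pos] at hhi
  refine ⟨r * π, ⟨r, rfl⟩, abs_lt.mpr ⟨by linarith, by linarith⟩, fun k _ ↦ ?_⟩
  have hrad : Irrational ((k : ℝ) ^ 2 + q) := by exact_mod_cast hirr.natCast_add (k ^ 2)
  have hsqrt : Irrational √((k : ℝ) ^ 2 + q) := hrad.sqrt (by positivity)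
  rw [mul_right_comm]
  exact (hsqrt.ratCast_mul (by exact_mod_cast hr₀)).sin_mul_pi_ne_zero
end

section
/- For every positive integer k and real numbers t₀, t₁, and for all complex numbers a, b, the inequality |a·e^{ikt₀} + b·e^{-ikt₀}|² + |a·e^{ikt₁} + b·e^{-ikt₁}|² ≥ (1/2)·sin²(k(t₀ - t₁))·(|a|² + |b|²) holds. -/
open Complex in
lemma aux1 (x y : ℝ) (a b : ℂ) :
    Complex.exp (-(y:ℂ)*I) * (a*Complex.exp ((x:ℂ)*I)+b*Complex.exp (-(x:ℂ)*I))
    - Complex.exp (-(x:ℂ)*I) * (a*Complex.exp ((y:ℂ)*I)+b*Complex.exp (-(y:ℂ)*I))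
    = 2*I*Complex.sin ((x-y:ℝ)) * a := by
  have h1 : ((x-y:ℝ):ℂ) = (x:ℂ) - y := by push_cast; ring
  rw [h1, Complex.sin]
  rw [show (-((x:ℂ)-y)*I) = -(x:ℂ)*I + (y:ℂ)*I by ring,
      show (((x:ℂ)-y)*I) = (x:ℂ)*I + (-(y:ℂ))*I by ring,
      Complex.exp_add, Complex.exp_add,
      show (-(y:ℂ)*I) = -((y:ℂ)*I) by ring, show (-(x:ℂ)*I) = -((x:ℂ)*I) by ring,
      Complex.exp_neg, Complex.exp_neg]
  have hx := Complex.exp_ne_zero ((x:ℂ)*I)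
  have hy := Complex.exp_ne_zero ((y:ℂ)*I)
  field_simp
  ring_nf
  simp only [Complex.I_sq]
  ring

open Complex in
lemma aux2 (x y : ℝ) (a b : ℂ) :
    Complex.exp ((y:ℂ)*I) * (a*Complex.exp ((x:ℂ)*I)+b*Complex.exp (-(x:ℂ)*I))
    - Complex.exp ((x:ℂ)*I) * (a*Complex.exp ((y:ℂ)*I)+b*Complex.exp (-(y:ℂ)*I))
    = -(2*I*Complex.sin ((x-y:ℝ))) * b := by
  have h1 : ((x-y:ℝ):ℂ) = (x:ℂ) - y := by push_cast; ring
  rw [h1, Complex.sin]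
  rw [show (-((x:ℂ)-y)*I) = (y:ℂ)*I + (-((x:ℂ)*I)) by ring,
      show (((x:ℂ)-y)*I) = (x:ℂ)*I + (-((y:ℂ)*I)) by ring,
      Complex.exp_add, Complex.exp_add,
      show (-(y:ℂ)*I) = -((y:ℂ)*I) by ring, show (-(x:ℂ)*I) = -((x:ℂ)*I) by ring,
      Complex.exp_neg, Complex.exp_neg]
  have hx := Complex.exp_ne_zero ((x:ℂ)*I)
  have hy := Complex.exp_ne_zero ((y:ℂ)*I)
  field_simp
  ring_nf
  simp only [Complex.I_sq]
  ring

open Complex in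
theorem stmt_11 (k : ℕ) (hk : 1 ≤ k) (t₀ t₁ : ℝ) (a b : ℂ) :
    ‖a * Complex.exp (I * k * t₀) + b * Complex.exp (-(I * k * t₀))‖ ^ 2 +
      ‖a * Complex.exp (I * k * t₁) + b * Complex.exp (-(I * k * t₁))‖ ^ 2 ≥
    (1 / 2) * Real.sin (k * (t₀ - t₁)) ^ 2 *
      (‖a‖ ^ 2 + ‖b‖ ^ 2) := by
  have e0 : I * (k:ℂ) * (t₀:ℂ) = (((k:ℝ)*t₀ : ℝ):ℂ) * I := by push_cast; ring
  have e1 : I * (k:ℂ) * (t₁:ℂ) = (((k:ℝ)*t₁ : ℝ):ℂ) * I := by push_cast; ring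
  have e0' : -(I * (k:ℂ) * (t₀:ℂ)) = -(((k:ℝ)*t₀ : ℝ):ℂ) * I := by push_cast; ring
  have e1' : -(I * (k:ℂ) * (t₁:ℂ)) = -(((k:ℝ)*t₁ : ℝ):ℂ) * I := by push_cast; ring
  rw [e0', e1', e0, e1]
  set x := (k:ℝ)*t₀
  set y := (k:ℝ)*t₁
  have hδ : (k:ℝ)*(t₀-t₁) = x - y := by simp only [x, y]; ring
  rw [hδ]
  set u := a*Complex.exp ((x:ℂ)*I)+b*Complex.exp (-(x:ℂ)*I)
  set v := a*Complex.exp ((y:ℂ)*I)+b*Complex.exp (-(y:ℂ)*I)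
  have k1 : Complex.exp (-(y:ℂ)*I) * u - Complex.exp (-(x:ℂ)*I) * v
      = 2*I*Complex.sin ((x-y:ℝ)) * a := by
    exact aux1 x y a b
  have k2 : Complex.exp ((y:ℂ)*I) * u - Complex.exp ((x:ℂ)*I) * v
      = -(2*I*Complex.sin ((x-y:ℝ))) * b := by
    exact aux2 x y a b
  have s := Real.sin (x - y)
  have habs : ∀ (z w : ℂ) (p q : ℝ), Complex.exp (-(p:ℂ)*I) = Complex.exp (-(p:ℂ)*I) → True := fun _ _ _ _ _ => trivial
  have hsin : Complex.sin ((x-y:ℝ)) = ((Real.sin (x-y) : ℝ) : ℂ) := by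
    rw [← Complex.ofReal_sin]
  have absexp : ∀ p : ℝ, ‖Complex.exp ((p:ℂ)*I)‖ = 1 := fun p => Complex.norm_exp_ofReal_mul_I p
  have absexp' : ∀ p : ℝ, ‖Complex.exp (-(p:ℂ)*I)‖ = 1 := by
    intro p
    have : -(p:ℂ)*I = ((-p : ℝ):ℂ)*I := by push_cast; ring
    rw [this]; exact Complex.norm_exp_ofReal_mul_I _
  have ha : 2 * |Real.sin (x-y)| * ‖a‖ ≤ ‖u‖ + ‖v‖ := by
    have := congrArg (‖·‖) k1
    rw [hsin] at this
    simp only [norm_mul, Complex.norm_two, Complex.norm_I, Complex.norm_real, Real.norm_eq_abs] at this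
    calc 2 * |Real.sin (x-y)| * ‖a‖
        = ‖Complex.exp (-(y:ℂ)*I) * u - Complex.exp (-(x:ℂ)*I) * v‖ := by
          rw [this]; ring
      _ ≤ ‖Complex.exp (-(y:ℂ)*I) * u‖ + ‖Complex.exp (-(x:ℂ)*I) * v‖ :=
          norm_sub_le _ _
      _ = ‖u‖ + ‖v‖ := by
          rw [norm_mul, norm_mul, absexp', absexp']; ring
  have hb : 2 * |Real.sin (x-y)| * ‖b‖ ≤ ‖u‖ + ‖v‖ := by
    have := congrArg (‖·‖) k2
    rw [hsin] at this
    simp only [norm_mul, norm_neg, Complex.norm_two, Complex.norm_I, Complex.norm_real, Real.norm_eq_abs] at this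
    calc 2 * |Real.sin (x-y)| * ‖b‖
        = ‖Complex.exp ((y:ℂ)*I) * u - Complex.exp ((x:ℂ)*I) * v‖ := by
          rw [this]; ring
      _ ≤ ‖Complex.exp ((y:ℂ)*I) * u‖ + ‖Complex.exp ((x:ℂ)*I) * v‖ :=
          norm_sub_le _ _
      _ = ‖u‖ + ‖v‖ := by
          rw [norm_mul, norm_mul, absexp, absexp]; ring
  have h2 : |Real.sin (x-y)|^2 = Real.sin (x-y)^2 := sq_abs _
  have h3 : (0:ℝ) ≤ |Real.sin (x-y)| := abs_nonneg _
  have h4 : (0:ℝ) ≤ ‖a‖ := norm_nonneg a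
  have h5 : (0:ℝ) ≤ ‖b‖ := norm_nonneg b
  have h6 : (0:ℝ) ≤ ‖u‖ := norm_nonneg u
  have h7 : (0:ℝ) ≤ ‖v‖ := norm_nonneg v
  nlinarith [sq_nonneg (‖u‖ - ‖v‖), mul_le_mul ha ha (by positivity) (by positivity), mul_le_mul hb hb (by positivity) (by positivity)]
end

section
/- Let n ≥ 1 and let x₁, …, xₙ be real numbers belonging to a real algebraic number field of degree n+1 over ℚ, such that 1, x₁, …, xₙ are linearly independent over ℚ. Then there is a constant c > 0 such that max over j of ‖k·xⱼ‖ ≥ c·k^{-1/n} for every positive integer k. -/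
/-! Write `(b₀, …, bₙ) = (1, x₁, …, xₙ)`, let `θ` be the trace-dual basis of `b` and `σ₀` the
real embedding of `K`. Since `∑ᵢ σ₀(bᵢ) σ(θᵢ) = 0` for every embedding `σ ≠ σ₀`, the element
`ζ = k θ₀ + ∑ⱼ pⱼ θⱼ`, with `pⱼ` the integer nearest to `k xⱼ`, has all `n` conjugates `σ ζ`,
`σ ≠ σ₀`, of size `O(maxⱼ ‖k xⱼ‖)`, while `σ₀ ζ = O(k)`. As `ζ ≠ 0` lies in a fixed lattice,
its norm `∏ σ ζ` is bounded away from `0`, whence `1 ≪ k · (maxⱼ ‖k xⱼ‖)ⁿ`. -/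

/-- Distance from a real number to the nearest integer. -/
noncomputable def dnint (y : ℝ) : ℝ := ⨅ m : ℤ, |y - m|

open Finset

theorem dnint_eq_abs_sub_round (y : ℝ) : dnint y = |y - round y| :=
  le_antisymm (ciInf_le ⟨0, by rintro _ ⟨m, rfl⟩; positivity⟩ (round y)) (le_ciInf (round_le y))

theorem sum_algHom_mul_dualBasis_eq_zero {F K L : Type*} [Field F] [Field K] [Field L]
    [Algebra F K] [Algebra F L] [FiniteDimensional F K] [Algebra.IsSeparable F K] [IsAlgClosed L]
    {ι : Type*} [Fintype ι] [DecidableEq ι] (B : Module.Basis ι F K) {σ τ : K →ₐ[F] L}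
    (hστ : σ ≠ τ) :
    ∑ i, σ (B i) * τ ((Algebra.traceForm F K).dualBasis (traceForm_nondegenerate F K) B i) = 0 := by
  set Bd := (Algebra.traceForm F K).dualBasis (traceForm_nondegenerate F K) B
  let M : Matrix ι (K →ₐ[F] L) L := .of fun i σ => σ (B i)
  let N : Matrix (K →ₐ[F] L) ι L := .of fun σ j => σ (Bd j)
  have hMN : M * N = 1 := by
    ext i j
    have htr : Algebra.trace F K (B i * Bd j) = if i = j then 1 else 0 := by
      rw [mul_comm, ← Algebra.traceForm_apply]
      exact (Algebra.traceForm F K).apply_dualBasis_left _ B j i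
    simp only [Matrix.mul_apply, M, N, Matrix.of_apply, ← map_mul, ← trace_eq_sum_embeddings, htr,
      Matrix.one_apply]
    split_ifs <;> simp
  have e : ι ≃ (K →ₐ[F] L) := Fintype.equivOfCardEq (by simp [Module.finrank_eq_card_basis B])
  classical
  have hNM := congrFun (congrFun ((Matrix.mul_eq_one_comm_of_equiv e).mp hMN) τ) σ
  simpa only [Matrix.mul_apply, Matrix.one_apply_ne hστ.symm, M, N, Matrix.of_apply, mul_comm]
    using hNM

theorem one_le_prod_norm_algHom {K : Type*} [Field K] [Algebra ℚ K] [FiniteDimensional ℚ K]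
    {ζ : K} (hζ : ζ ≠ 0) (hζint : IsIntegral ℤ ζ) :
    1 ≤ ∏ σ : K →ₐ[ℚ] ℂ, ‖σ ζ‖ := by
  obtain ⟨z, hz⟩ := IsIntegrallyClosed.isIntegral_iff.mp (Algebra.isIntegral_norm ℚ hζint)
  have hz0 : z ≠ 0 := by
    rintro rfl
    exact hζ (by simpa using hz.symm)
  rw [← norm_prod, ← Algebra.norm_eq_prod_embeddings ℚ ℂ ζ, ← hz]
  simpa using (Int.cast_le (R := ℝ)).mpr (Int.one_le_abs hz0)

theorem exists_pos_le_prod_norm_algHom_sum_zsmul {K : Type*} [Field K] [Algebra ℚ K]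
    [FiniteDimensional ℚ K] {ι : Type*} [Fintype ι] (θ : ι → K) :
    ∃ δ > 0, ∀ c : ι → ℤ, ∑ i, c i • θ i ≠ 0 →
      δ ≤ ∏ σ : K →ₐ[ℚ] ℂ, ‖σ (∑ i, c i • θ i)‖ := by
  classical
  obtain ⟨D, hD0, hD⟩ := exists_integral_multiples ℤ ℚ (univ.image θ)
  refine ⟨(|(D : ℝ)| ^ Fintype.card (K →ₐ[ℚ] ℂ))⁻¹, by positivity, fun c hc => ?_⟩
  set ζ := ∑ i, c i • θ i
  have hint : IsIntegral ℤ (D • ζ) := by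
    rw [smul_sum]
    refine IsIntegral.sum _ fun i _ => ?_
    rw [smul_comm]
    exact (hD _ (mem_image_of_mem _ (mem_univ i))).zsmul _
  have hne : D • ζ ≠ 0 := by
    have := algebraRat.charZero K
    rw [zsmul_eq_mul]
    exact mul_ne_zero (Int.cast_ne_zero.mpr hD0) hc
  have := one_le_prod_norm_algHom hne hint
  simp only [zsmul_eq_mul, map_mul, map_intCast, norm_mul, Complex.norm_intCast,
    prod_mul_distrib, prod_const, card_univ] at this
  rwa [inv_le_iff_one_le_mul₀' (by positivity)]

theorem norm_sum_mul_le_of_sum_mul_eq_zero {R ι : Type*} [SeminormedCommRing R] [Fintype ι]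
    (c v w : ι → R) (t : R) (h : ∑ i, v i * w i = 0) :
    ‖∑ i, c i * w i‖ ≤ ∑ i, ‖c i - t * v i‖ * ‖w i‖ := by
  have : ∑ i, c i * w i = ∑ i, (c i - t * v i) * w i := by
    simp only [sub_mul, sum_sub_distrib, mul_assoc, ← mul_sum, h, mul_zero, sub_zero]
  rw [this]
  exact (norm_sum_le _ _).trans (sum_le_sum fun i _ => norm_mul_le _ _)

theorem norm_le_mul_norm_add_one_of_norm_sub_le {a v : ℂ} {t : ℝ} (ht : 1 ≤ t)
    (h : ‖a - t * v‖ ≤ 1) : ‖a‖ ≤ t * (‖v‖ + 1) :=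
  calc ‖a‖ ≤ ‖(t : ℂ) * v‖ + ‖a - t * v‖ := norm_le_insert' _ _
    _ ≤ t * ‖v‖ + 1 := by
      rw [norm_mul, Complex.norm_real, Real.norm_of_nonneg (by linarith)]
      linarith
    _ ≤ t * (‖v‖ + 1) := by nlinarith

theorem exists_one_le_mul_pow_of_norm_sub_le {K : Type*} [Field K] [Algebra ℚ K]
    [FiniteDimensional ℚ K] {n : ℕ} (hK : Module.finrank ℚ K = n + 1) {ι : Type*} [Fintype ι]
    (σ₀ : K →ₐ[ℚ] ℂ) {θ : ι → K} (hθ : LinearIndependent ℚ θ) (v : ι → ℂ)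
    (horth : ∀ σ ≠ σ₀, ∑ i, v i * σ (θ i) = 0) :
    ∃ A : ℝ, ∀ t : ℝ, 1 ≤ t → ∀ c : ι → ℤ, c ≠ 0 → ∀ ε ≤ 1,
      (∀ i, ‖(c i : ℂ) - t * v i‖ ≤ ε) → 1 ≤ A * t * ε ^ n := by
  classical
  obtain ⟨δ, hδ0, hδ⟩ := exists_pos_le_prod_norm_algHom_sum_zsmul θ
  set C₀ := ∑ i, (‖v i‖ + 1) * ‖σ₀ (θ i)‖
  set C := ∏ σ ∈ univ.erase σ₀, ∑ i, ‖σ (θ i)‖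
  refine ⟨δ⁻¹ * C₀ * C, fun t ht c hc ε hε1 hcv => ?_⟩
  set ζ : K := ∑ i, c i • θ i
  have hζ0 : ζ ≠ 0 := fun h =>
    hc (funext fun i => Fintype.linearIndependent_iff.mp (hθ.restrict_scalars' ℤ) c h i)
  have hσζ (σ : K →ₐ[ℚ] ℂ) : σ ζ = ∑ i, (c i : ℂ) * σ (θ i) := by
    simp only [ζ, map_sum, zsmul_eq_mul, map_mul, map_intCast]
  have hε0 : 0 ≤ ε := by
    obtain ⟨i, -⟩ := Function.ne_iff.mp hc
    exact (norm_nonneg _).trans (hcv i)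
  have hσ₀ : ‖σ₀ ζ‖ ≤ t * C₀ := by
    rw [hσζ, mul_sum]
    refine (norm_sum_le _ _).trans (sum_le_sum fun i _ => ?_)
    rw [norm_mul, ← mul_assoc]
    gcongr
    exact norm_le_mul_norm_add_one_of_norm_sub_le ht ((hcv i).trans hε1)
  have hσ (σ) (hmem : σ ∈ univ.erase σ₀) : ‖σ ζ‖ ≤ ε * ∑ i, ‖σ (θ i)‖ := by
    rw [hσζ, mul_sum]
    exact (norm_sum_mul_le_of_sum_mul_eq_zero _ _ _ (t : ℂ) (horth σ (ne_of_mem_erase hmem))).trans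
      (sum_le_sum fun i _ => mul_le_mul_of_nonneg_right (hcv i) (norm_nonneg _))
  have hcard : (univ.erase σ₀).card = n := by simp [card_erase_of_mem, AlgHom.card, hK]
  calc 1 = δ⁻¹ * δ := (inv_mul_cancel₀ hδ0.ne').symm
    _ ≤ δ⁻¹ * ∏ σ : K →ₐ[ℚ] ℂ, ‖σ ζ‖ := by gcongr; exact hδ c hζ0
    _ = δ⁻¹ * (‖σ₀ ζ‖ * ∏ σ ∈ univ.erase σ₀, ‖σ ζ‖) := by
      rw [mul_prod_erase _ (fun σ => ‖σ ζ‖) (mem_univ σ₀)]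
    _ ≤ δ⁻¹ * ((t * C₀) * ∏ σ ∈ univ.erase σ₀, (ε * ∑ i, ‖σ (θ i)‖)) := by
      gcongr with σ hmem
      exact hσ σ hmem
    _ = δ⁻¹ * C₀ * C * t * ε ^ n := by rw [prod_mul_distrib, prod_const, hcard]; ring

theorem exists_one_le_mul_pow_of_abs_sub_le {n : ℕ} {x : Fin n → ℝ} {K : Subfield ℝ}
    (hK : Module.finrank ℚ K = n + 1) (hxK : ∀ j, x j ∈ K)
    (hli : LinearIndependent ℚ (Fin.cons (1 : ℝ) x : Fin (n + 1) → ℝ)) :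
    ∃ A : ℝ, ∀ k : ℕ, 1 ≤ k → ∀ p : Fin n → ℤ, ∀ ε : ℝ, 0 ≤ ε → ε ≤ 1 →
      (∀ j, |k * x j - p j| ≤ ε) → 1 ≤ A * k * ε ^ n := by
  have : FiniteDimensional ℚ K := .of_finrank_pos (by omega)
  let b : Fin (n + 1) → K := Fin.cons 1 fun j => ⟨x j, hxK j⟩
  have hb : K.subtype.toRatAlgHom.toLinearMap ∘ b = Fin.cons (1 : ℝ) x := by
    funext i
    refine Fin.cases ?_ (fun j => ?_) i <;> rfl
  let B := basisOfLinearIndependentOfCardEqFinrank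
    (.of_comp K.subtype.toRatAlgHom.toLinearMap (by rw [hb]; exact hli)) (by simp [hK])
  let σ₀ : K →ₐ[ℚ] ℂ := (Complex.ofRealHom.comp K.subtype).toRatAlgHom
  obtain ⟨A, hA⟩ := exists_one_le_mul_pow_of_norm_sub_le hK σ₀
    ((Algebra.traceForm ℚ K).dualBasis (traceForm_nondegenerate ℚ K) B).linearIndependent
    (fun i => σ₀ (B i)) fun σ hσ => sum_algHom_mul_dualBasis_eq_zero B hσ.symm
  have hv (i) : σ₀ (B i) = ((Fin.cons (1 : ℝ) x : Fin (n + 1) → ℝ) i : ℂ) := by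
    rw [coe_basisOfLinearIndependentOfCardEqFinrank, ← congrFun hb i]
    rfl
  refine ⟨A, fun k hk p ε hε0 hε1 hp => hA k (by exact_mod_cast hk) (Fin.cons k p) ?_ ε hε1 ?_⟩
  · intro h
    have : k = 0 := by simpa using congrFun h 0
    omega
  · intro i
    rw [hv]
    refine Fin.cases ?_ (fun j => ?_) i
    · simpa using hε0
    · simpa [← Complex.ofReal_intCast, ← Complex.ofReal_natCast, ← Complex.ofReal_mul,
        ← Complex.ofReal_sub, abs_sub_comm] using hp j

theorem exists_pos_mul_rpow_le_of_one_le_mul_pow {n : ℕ} (hn : n ≠ 0) {f : ℕ → ℝ}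
    (hf : ∀ k, 0 ≤ f k) {A : ℝ} (hA : ∀ k : ℕ, 1 ≤ k → 1 ≤ A * k * f k ^ n) :
    ∃ c > 0, ∀ k : ℕ, 1 ≤ k → c * (k : ℝ) ^ (-(1 / n : ℝ)) ≤ f k := by
  set A' := max A 1
  have hA' : 0 < A' := one_pos.trans_le (le_max_right _ _)
  refine ⟨A' ^ (-(1 / n : ℝ)), by positivity, fun k hk => ?_⟩
  have hk0 : (0 : ℝ) < k := by exact_mod_cast hk
  have hpow : (A' * k)⁻¹ ≤ f k ^ n := by
    rw [inv_le_iff_one_le_mul₀' (by positivity)]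
    calc 1 ≤ A * k * f k ^ n := hA k hk
      _ ≤ A' * k * f k ^ n := by have := hf k; gcongr; exact le_max_left _ _
  calc A' ^ (-(1 / n : ℝ)) * (k : ℝ) ^ (-(1 / n : ℝ)) = (A' * k)⁻¹ ^ (n⁻¹ : ℝ) := by
        rw [← Real.mul_rpow hA'.le hk0.le, Real.rpow_neg (by positivity),
          Real.inv_rpow (by positivity), one_div]
    _ ≤ (f k ^ n) ^ (n⁻¹ : ℝ) := by gcongr
    _ = f k := Real.pow_rpow_inv_natCast (hf k) hn

theorem stmt_13 (n : ℕ) (hn : 1 ≤ n) (x : Fin n → ℝ)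
    (K : Subfield ℝ) (hK : Module.finrank ℚ K = n + 1)
    (hxK : ∀ j, x j ∈ K)
    (hli : LinearIndependent ℚ (Fin.cons (1 : ℝ) x : Fin (n + 1) → ℝ)) :
    ∃ c > (0:ℝ), ∀ k : ℕ, 1 ≤ k →
      (⨆ j : Fin n, dnint (k * x j)) ≥ c * (k : ℝ) ^ (-(1 / n : ℝ)) := by
  obtain ⟨A, hA⟩ := exists_one_le_mul_pow_of_abs_sub_le hK hxK hli
  have hdist (k : ℕ) (j : Fin n) : |k * x j - round (k * x j : ℝ)| ≤ ⨆ j, dnint (k * x j) := by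
    rw [← dnint_eq_abs_sub_round]
    exact le_ciSup (f := fun j => dnint (k * x j)) (Set.finite_range _).bddAbove j
  have hnonneg (k : ℕ) : 0 ≤ ⨆ j, dnint (k * x j) :=
    Real.iSup_nonneg fun j => by rw [dnint_eq_abs_sub_round]; positivity
  have hle_one (k : ℕ) : ⨆ j, dnint (k * x j) ≤ 1 := by
    refine Real.iSup_le (fun j => ?_) zero_le_one
    rw [dnint_eq_abs_sub_round]
    linarith [abs_sub_round (k * x j : ℝ)]
  exact exists_pos_mul_rpow_le_of_one_le_mul_pow (by omega) hnonneg
    fun k hk => hA k hk _ _ (hnonneg k) (hle_one k) (hdist k)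
end

section
/- Let n ≥ 1 and let x₁, …, xₙ be real numbers belonging to a real algebraic number field of degree n+1 over ℚ, such that 1, x₁, …, xₙ are linearly independent over ℚ. Then there is a constant c > 0 such that ‖k₁x₁ + ⋯ + kₙxₙ‖ ≥ c·(max over j of |kⱼ|)^{-n} for every nonzero integer vector (k₁, …, kₙ) ∈ ℤⁿ. -/
/-!
For `m ∈ ℤ`, the number `α = k₁x₁ + ⋯ + kₙxₙ - m` is a nonzero element of `K` (by linear
independence), and a fixed integer multiple `d α` is an algebraic integer. Hence the norm of `d α`
is a nonzero integer, so the product of the `n + 1` conjugates of `α` is at least `|d|^{-(n+1)}`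
in absolute value. One conjugate is `α` itself; the other `n` are `O(H)` with `H = max |kⱼ|`,
since `|m| = O(H)` as soon as `|α| < 1`. Therefore `|α| ≫ H^{-n}`: Liouville's argument applied
to a linear form instead of a polynomial.
-/

open Module

namespace NumberField

variable {K : Type*} [Field K] [NumberField K]

theorem one_le_norm_norm_of_isIntegral {β : K} (hβ : IsIntegral ℤ β) (hβ0 : β ≠ 0) :
    1 ≤ ‖Algebra.norm ℚ β‖ := by
  set b : 𝓞 K := ⟨β, hβ⟩
  have hN : Algebra.norm ℤ b ≠ 0 :=
    Algebra.norm_ne_zero_iff.mpr fun h => hβ0 (congrArg ((↑) : 𝓞 K → K) h)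
  rw [show β = (b : K) from rfl, ← Algebra.coe_norm_int, Int.norm_cast_rat, Int.norm_eq_abs]
  exact_mod_cast Int.one_le_abs hN

theorem house_sum_zsmul_le {ι : Type*} [Fintype ι] (a : ι → ℤ) (y : ι → K) {H : ℝ}
    (ha : ∀ i, |a i| ≤ H) : house (∑ i, a i • y i) ≤ H * ∑ i, house (y i) := by
  rw [Finset.mul_sum]
  refine (house_sum_le_sum_house _ _).trans (Finset.sum_le_sum fun i _ => ?_)
  calc house (a i • y i) ≤ |(a i : ℝ)| * house (y i) := by
        simpa [zsmul_eq_mul] using house_mul_le (a i : K) (y i)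
    _ ≤ H * house (y i) := by
      gcongr
      · exact house_nonneg _
      · exact_mod_cast ha i

theorem one_le_norm_embedding_mul_pow_of_isIntegral {ι : Type*} [Fintype ι] (y : ι → K)
    (hy : ∀ i, IsIntegral ℤ (y i)) (σ : K →+* ℂ) (a : ι → ℤ) {H : ℝ} (ha : ∀ i, |a i| ≤ H)
    (hα : ∑ i, a i • y i ≠ 0) :
    1 ≤ ‖σ (∑ i, a i • y i)‖ * (H * ∑ i, house (y i)) ^ (finrank ℚ K - 1) := by
  have hint : IsIntegral ℤ (∑ i, a i • y i) :=
    IsIntegral.sum _ fun i _ => (hy i).zsmul (a i)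
  calc 1 ≤ ‖Algebra.norm ℚ (∑ i, a i • y i)‖ := one_le_norm_norm_of_isIntegral hint hα
    _ ≤ ‖σ (∑ i, a i • y i)‖ * house (∑ i, a i • y i) ^ (finrank ℚ K - 1) :=
      norm_norm_le_norm_mul_house_pow _ σ
    _ ≤ ‖σ (∑ i, a i • y i)‖ * (H * ∑ i, house (y i)) ^ (finrank ℚ K - 1) := by
      gcongr
      · exact house_nonneg _
      · exact house_sum_zsmul_le a y ha

theorem exists_pos_div_pow_le_norm_embedding_sum_zsmul {ι : Type*} [Fintype ι] (y : ι → K)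
    (σ : K →+* ℂ) : ∃ c > 0, ∀ (a : ι → ℤ) (H : ℝ), (∀ i, |a i| ≤ H) → ∑ i, a i • y i ≠ 0 →
      c / H ^ (finrank ℚ K - 1) ≤ ‖σ (∑ i, a i • y i)‖ := by
  classical
  obtain ⟨d, hd0, hd⟩ := exists_integral_multiples ℤ ℚ (Finset.univ.image y)
  have hdy (i : ι) : IsIntegral ℤ (d • y i) :=
    hd _ (Finset.mem_image_of_mem y (Finset.mem_univ i))
  set e := finrank ℚ K - 1
  set M := ∑ i, house (d • y i)
  have hM : 0 ≤ M := Finset.sum_nonneg fun i _ => house_nonneg _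
  refine ⟨1 / (|(d : ℝ)| * (M + 1) ^ e), by positivity, fun a H ha hα => ?_⟩
  obtain ⟨i, hi⟩ : ∃ i, a i ≠ 0 := by
    by_contra! h
    simp [h] at hα
  have hH : 0 < H := lt_of_lt_of_le (by exact_mod_cast abs_pos.mpr hi) (ha i)
  have hscale : ∑ i, a i • d • y i = d • ∑ i, a i • y i := by
    simp only [Finset.smul_sum, smul_comm d]
  have key := one_le_norm_embedding_mul_pow_of_isIntegral _ hdy σ a ha
    (by rw [hscale]; exact smul_ne_zero hd0 hα)
  rw [hscale, map_zsmul, zsmul_eq_mul, norm_mul, Complex.norm_intCast] at key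
  rw [div_le_iff₀ (by positivity), div_le_iff₀' (by positivity)]
  calc 1 ≤ |(d : ℝ)| * ‖σ (∑ i, a i • y i)‖ * (H * M) ^ e := key
    _ ≤ |(d : ℝ)| * ‖σ (∑ i, a i • y i)‖ * (H * (M + 1)) ^ e := by gcongr; linarith
    _ = |(d : ℝ)| * (M + 1) ^ e * (‖σ (∑ i, a i • y i)‖ * H ^ e) := by
      rw [mul_pow]; ring

end NumberField

theorem Subfield.exists_pos_div_pow_le_abs_sum_zsmul (K : Subfield ℝ) [FiniteDimensional ℚ K]
    {ι : Type*} [Fintype ι] (v : ι → ℝ) (hv : ∀ i, v i ∈ K) :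
    ∃ c > 0, ∀ (a : ι → ℤ) (H : ℝ), (∀ i, |a i| ≤ H) → ∑ i, a i • v i ≠ 0 →
      c / H ^ (finrank ℚ K - 1) ≤ |∑ i, a i • v i| := by
  have : NumberField K := {}
  obtain ⟨c, hc, hbound⟩ := NumberField.exists_pos_div_pow_le_norm_embedding_sum_zsmul
    (fun i => (⟨v i, hv i⟩ : K)) (Complex.ofRealHom.comp K.subtype)
  refine ⟨c, hc, fun a H ha hα => ?_⟩
  have hcoe : ((∑ i, a i • (⟨v i, hv i⟩ : K) : K) : ℝ) = ∑ i, a i • v i := by push_cast; rfl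
  specialize hbound a H ha (fun h => hα (by rw [← hcoe, h]; rfl))
  rwa [RingHom.comp_apply, Subfield.subtype_apply, hcoe, Complex.ofRealHom_eq_coe,
    Complex.norm_real, Real.norm_eq_abs] at hbound

theorem abs_sum_mul_le {ι : Type*} (s : Finset ι) (k x : ι → ℝ) {H : ℝ}
    (hk : ∀ i ∈ s, |k i| ≤ H) :
    |∑ i ∈ s, k i * x i| ≤ H * ∑ i ∈ s, |x i| := by
  rw [Finset.mul_sum]
  refine (Finset.abs_sum_le_sum_abs _ _).trans (Finset.sum_le_sum fun i hi => ?_)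
  rw [abs_mul]
  exact mul_le_mul_of_nonneg_right (hk i hi) (abs_nonneg _)

theorem sum_cons_zsmul_cons_one {n : ℕ} (m : ℤ) (k : Fin n → ℤ) (x : Fin n → ℝ) :
    ∑ i, (Fin.cons (-m) k : Fin (n + 1) → ℤ) i • (Fin.cons 1 x : Fin (n + 1) → ℝ) i =
      ∑ j, (k j : ℝ) * x j - m := by
  simp [Fin.sum_univ_succ, zsmul_eq_mul]
  ring

theorem exists_pos_div_pow_le_abs_sum_mul_sub_intCast {n : ℕ} (x : Fin n → ℝ) (K : Subfield ℝ)
    (hK : finrank ℚ K = n + 1) (hxK : ∀ j, x j ∈ K)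
    (hli : LinearIndependent ℚ (Fin.cons (1 : ℝ) x : Fin (n + 1) → ℝ)) :
    ∃ c > 0, ∀ k : Fin n → ℤ, k ≠ 0 → ∀ H : ℝ, (∀ j, |k j| ≤ H) → ∀ m : ℤ,
      c / H ^ n ≤ |∑ j, (k j : ℝ) * x j - m| := by
  have : FiniteDimensional ℚ K := Module.finite_of_finrank_pos (by omega)
  obtain ⟨c, hc, hbound⟩ :=
    K.exists_pos_div_pow_le_abs_sum_zsmul (Fin.cons 1 x) (Fin.cases K.one_mem hxK)
  rw [hK, Nat.add_sub_cancel] at hbound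
  set B := ∑ j, |x j|
  have hB : 0 ≤ B := Finset.sum_nonneg fun j _ => abs_nonneg _
  refine ⟨min 1 (c / (B + 1) ^ n), by positivity, fun k hk H hkH m => ?_⟩
  set S := ∑ j, (k j : ℝ) * x j
  obtain ⟨j₀, hj₀⟩ := Function.ne_iff.mp hk
  have hH : 1 ≤ H := le_trans (by exact_mod_cast Int.one_le_abs hj₀) (hkH j₀)
  by_cases hfar : 1 ≤ |S - m|
  · calc min 1 (c / (B + 1) ^ n) / H ^ n ≤ 1 / 1 :=
          div_le_div₀ zero_le_one (min_le_left _ _) zero_lt_one (one_le_pow₀ hH)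
      _ ≤ |S - m| := by rwa [div_one]
  have hS : |S| ≤ H * B := abs_sum_mul_le _ _ _ fun j _ => by exact_mod_cast hkH j
  have hm : |(m : ℝ)| ≤ H * (B + 1) := by
    calc |(m : ℝ)| ≤ |S| + |S - m| := by simpa using abs_sub S (S - m)
      _ ≤ H * (B + 1) := by rw [mul_add_one]; linarith
  have ha : ∀ i, |(Fin.cons (-m) k : Fin (n + 1) → ℤ) i| ≤ H * (B + 1) :=
    Fin.cases (by simpa using hm) fun j => by
      simpa using (hkH j).trans (le_mul_of_one_le_right (by linarith) (by linarith))
  have hα :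
      ∑ i, (Fin.cons (-m) k : Fin (n + 1) → ℤ) i • (Fin.cons 1 x : Fin (n + 1) → ℝ) i ≠ 0 :=
    fun h => hj₀ (by simpa using
      Fintype.linearIndependent_iff.mp (hli.restrict_scalars' ℤ) _ h j₀.succ)
  calc min 1 (c / (B + 1) ^ n) / H ^ n ≤ c / (B + 1) ^ n / H ^ n := by
        gcongr; exact min_le_right _ _
    _ = c / (H * (B + 1)) ^ n := by rw [mul_pow]; ring
    _ ≤ |S - m| := sum_cons_zsmul_cons_one m k x ▸ hbound _ _ ha hα

theorem stmt_14_general (n : ℕ) (x : Fin n → ℝ)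
    (K : Subfield ℝ) (hK : Module.finrank ℚ K = n + 1)
    (hxK : ∀ j, x j ∈ K)
    (hli : LinearIndependent ℚ (Fin.cons (1 : ℝ) x : Fin (n + 1) → ℝ)) :
    ∃ c > (0:ℝ), ∀ k : Fin n → ℤ, k ≠ 0 →
      dnint (∑ j, (k j : ℝ) * x j) ≥ c * ((⨆ j, |k j| : ℤ) : ℝ) ^ (-(n : ℝ)) := by
  obtain ⟨c, hc, hbound⟩ := exists_pos_div_pow_le_abs_sum_mul_sub_intCast x K hK hxK hli
  refine ⟨c, hc, fun k hk => ?_⟩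
  have hkH : ∀ j, |k j| ≤ ⨆ j, |k j| := le_ciSup (Set.finite_range _).bddAbove
  obtain ⟨j₀, hj₀⟩ := Function.ne_iff.mp hk
  have hH : (0 : ℝ) < ((⨆ j, |k j| : ℤ) : ℝ) := by
    exact_mod_cast (abs_pos.mpr hj₀).trans_le (hkH j₀)
  rw [Real.rpow_neg hH.le, Real.rpow_natCast, ← div_eq_mul_inv]
  exact le_ciInf fun m => hbound k hk _ (fun j => Int.cast_le.mpr (hkH j)) m

theorem stmt_14 (n : ℕ) (hn : 1 ≤ n) (x : Fin n → ℝ)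
    (K : Subfield ℝ) (hK : Module.finrank ℚ K = n + 1)
    (hxK : ∀ j, x j ∈ K)
    (hli : LinearIndependent ℚ (Fin.cons (1 : ℝ) x : Fin (n + 1) → ℝ)) :
    ∃ c > (0:ℝ), ∀ k : Fin n → ℤ, k ≠ 0 →
      dnint (∑ j, (k j : ℝ) * x j) ≥ c * ((⨆ j, |k j| : ℤ) : ℝ) ^ (-(n : ℝ)) :=
  stmt_14_general n x K hK hxK hli
end

section
/- The set of real numbers x such that there exists c > 0 with ‖kx‖ ≥ c/k for all positive integers k (the badly approximable numbers) has Lebesgue measure zero. -/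
/-!
Each `badlyApproxSet c` with `c > 0` is porous. Let `x` be in it and `Q ≥ 1`. Dirichlet's theorem
gives `q ≤ Q` with `‖q x‖ ≤ 1 / Q`, which forces `q ≥ c Q`, and no point within `c / q²` of the
fraction `round (q x) / q` lies in the set. This hole, of length at least `2 c / Q²`, lies in the
ball of radius `r = 2 / (c Q²)` about `x`, so the set fills at most a fraction `1 - c² / 2` of
arbitrarily small balls around each of its points, and the Lebesgue density theorem makes it null.
-/

open MeasureTheory Filter Metric Topology
open scoped ENNReal

lemma dnint_le (y : ℝ) (m : ℤ) : dnint y ≤ |y - m| :=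
  ciInf_le ⟨0, by rintro _ ⟨n, rfl⟩; positivity⟩ m

lemma measurable_dnint : Measurable dnint :=
  Measurable.iInf fun m => by fun_prop

def badlyApproxSet (c : ℝ) : Set ℝ := {x | ∀ k : ℕ, 1 ≤ k → c / k ≤ dnint (k * x)}

lemma measurableSet_badlyApproxSet (c : ℝ) : MeasurableSet (badlyApproxSet c) := by
  simp only [badlyApproxSet, Set.ofPred_forall]
  exact .iInter fun k => .iInter fun _ =>
    measurableSet_le measurable_const (measurable_dnint.comp (by fun_prop))

theorem measure_eq_zero_of_frequently_measure_inter_closedBall_le {β : Type*} [MetricSpace β]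
    [MeasurableSpace β] [BorelSpace β] [SecondCountableTopology β] [HasBesicovitchCovering β]
    (μ : Measure β) [IsLocallyFiniteMeasure μ] {s : Set β} (hs : MeasurableSet s) {a : ℝ≥0∞}
    (ha : a < 1) (h : ∀ x ∈ s, ∃ᶠ r in 𝓝[>] 0, μ (s ∩ closedBall x r) ≤ a * μ (closedBall x r)) :
    μ s = 0 := by
  by_contra hs0
  have : (ae (μ.restrict s)).NeBot := ae_neBot.2 (by simpa using hs0)
  obtain ⟨x, hxs, hx⟩ :=
    ((ae_restrict_mem hs).and (Besicovitch.ae_tendsto_measure_inter_div μ s)).exists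
  obtain ⟨r, hle, hgt⟩ := ((h x hxs).and_eventually (hx.eventually (eventually_gt_nhds ha))).exists
  exact (ENNReal.div_le_of_le_mul hle).not_gt hgt

lemma disjoint_badlyApproxSet_ball (c : ℝ) {q : ℕ} (hq : 1 ≤ q) (j : ℤ) :
    Disjoint (badlyApproxSet c) (ball (j / q) (c / q ^ 2)) := by
  refine Set.disjoint_left.2 fun y hy hyj => (hy q hq).not_gt ?_
  have hq0 : (0 : ℝ) < q := by exact_mod_cast hq
  rw [mem_ball, Real.dist_eq] at hyj
  calc dnint (q * y) ≤ |q * y - j| := dnint_le _ j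
    _ = q * |y - j / q| := by
      rw [← abs_of_pos hq0, ← abs_mul, abs_of_pos hq0, mul_sub, mul_div_cancel₀ _ hq0.ne']
    _ < q * (c / q ^ 2) := by gcongr
    _ = c / q := by field_simp

lemma volume_badlyApproxSet_inter_closedBall_le {c : ℝ} (hc : 0 < c) {x : ℝ}
    (hx : x ∈ badlyApproxSet c) {Q : ℕ} (hQ : 1 ≤ Q) :
    volume (badlyApproxSet c ∩ closedBall x (2 / (c * Q ^ 2))) ≤
      ENNReal.ofReal (1 - c ^ 2 / 2) * volume (closedBall x (2 / (c * Q ^ 2))) := by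
  set r := 2 / (c * Q ^ 2) with hr
  have hQ0 : (0 : ℝ) < Q := by exact_mod_cast hQ
  obtain ⟨q, hq, hqQ, hdir⟩ := Real.exists_nat_abs_mul_sub_round_le x hQ
  have hq0 : (0 : ℝ) < q := by exact_mod_cast hq
  have hqQ' : (q : ℝ) ≤ Q := by exact_mod_cast hqQ
  set j := round (q * x)
  have hqx : |q * x - j| ≤ 1 / Q :=
    hdir.trans (one_div_le_one_div_of_le hQ0 (by linarith))
  have hcq : c / q ≤ 1 / Q := ((hx q hq).trans (dnint_le _ j)).trans hqx
  have hcQq : c * Q ≤ q := by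
    rw [div_le_div_iff₀ hq0 hQ0] at hcq; linarith
  have hball : ball (j / q : ℝ) (c / q ^ 2) ⊆ closedBall x r := by
    intro y hy
    rw [mem_ball, Real.dist_eq] at hy
    rw [mem_closedBall, Real.dist_eq]
    have hxj : |j / q - x| = |q * x - j| / q := by
      rw [abs_sub_comm, ← abs_of_pos hq0, ← abs_div, abs_of_pos hq0, sub_div,
        mul_div_cancel_left₀ _ hq0.ne']
    calc |y - x| ≤ |y - j / q| + |j / q - x| := abs_sub_le _ _ _
      _ ≤ c / q / q + 1 / Q / q := by
          rw [hxj, div_div, ← sq]; gcongr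
      _ ≤ 1 / Q / q + 1 / Q / q := by gcongr
      _ = 2 / (Q * q) := by ring
      _ ≤ 2 / (Q * (c * Q)) := by gcongr
      _ = r := by ring
  have hvol : ENNReal.ofReal (2 * (c / Q ^ 2)) ≤ volume (ball (j / q : ℝ) (c / q ^ 2)) := by
    rw [Real.volume_ball]; gcongr
  calc volume (badlyApproxSet c ∩ closedBall x r)
      ≤ volume (closedBall x r \ ball (j / q : ℝ) (c / q ^ 2)) :=
        measure_mono fun y hy =>
          ⟨hy.2, Set.disjoint_left.1 (disjoint_badlyApproxSet_ball c hq j) hy.1⟩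
    _ = volume (closedBall x r) - volume (ball (j / q : ℝ) (c / q ^ 2)) :=
        measure_sdiff hball measurableSet_ball.nullMeasurableSet measure_ball_lt_top.ne
    _ ≤ ENNReal.ofReal (2 * r) - ENNReal.ofReal (2 * (c / Q ^ 2)) := by
        rw [Real.volume_closedBall]; gcongr
    _ = ENNReal.ofReal (1 - c ^ 2 / 2) * volume (closedBall x r) := by
        rw [Real.volume_closedBall, ← ENNReal.ofReal_sub _ (by positivity),
          ← ENNReal.ofReal_mul' (by positivity)]
        congr 1
        rw [hr]; field_simp

lemma volume_badlyApproxSet {c : ℝ} (hc : 0 < c) : volume (badlyApproxSet c) = 0 := by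
  refine measure_eq_zero_of_frequently_measure_inter_closedBall_le volume
    (measurableSet_badlyApproxSet c) (a := ENNReal.ofReal (1 - c ^ 2 / 2))
    (ENNReal.ofReal_lt_one.2 (by nlinarith)) fun x hx => ?_
  have hr : Tendsto (fun Q : ℕ => 2 / (c * Q ^ 2)) atTop (𝓝[>] 0) :=
    tendsto_nhdsWithin_iff.2
      ⟨tendsto_const_nhds.div_atTop <| ((tendsto_pow_atTop two_ne_zero).comp
          tendsto_natCast_atTop_atTop).const_mul_atTop hc,
        (eventually_ge_atTop 1).mono fun Q hQ => by
          have : (0 : ℝ) < Q := by exact_mod_cast hQ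
          simp only [Set.mem_Ioi]; positivity⟩
  exact hr.frequently ((eventually_ge_atTop 1).mono fun Q hQ =>
    volume_badlyApproxSet_inter_closedBall_le hc hx hQ).frequently

theorem stmt_16 :
    MeasureTheory.volume
      {x : ℝ | ∃ c > (0:ℝ), ∀ k : ℕ, 1 ≤ k → dnint (k * x) ≥ c / k} = 0 := by
  have hsub : {x : ℝ | ∃ c > (0:ℝ), ∀ k : ℕ, 1 ≤ k → dnint (k * x) ≥ c / k} ⊆
      ⋃ n : ℕ, badlyApproxSet (1 / (n + 1)) := by
    rintro x ⟨c, hc, hx⟩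
    obtain ⟨n, hn⟩ := exists_nat_one_div_lt hc
    exact Set.mem_iUnion.2
      ⟨n, fun k hk => (div_le_div_of_nonneg_right hn.le k.cast_nonneg).trans (hx k hk)⟩
  exact measure_mono_null hsub (measure_iUnion_null fun n => volume_badlyApproxSet (by positivity))
end
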